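/- The images of the standard generating loops ρᵢ(t) = p₀ + t·eᵢ (mod ℤ^5) of π₁(T^5, p₀) under the quotient map π : T^5 → T^5/Γ are each null-homotopic in T^5/Γ; here for ρ₁ this follows because the loop t ↦ p₁ + t·e₁ based at p₁ = (0, 1/4, 0, 0, 0) satisfies β(p₁ + t·e₁) = p₁ + (1-t)·e₁ mod ℤ^5. -/
import Mathlib


abbrev T5 : Type := Fin 5 → AddCircle (1 : ℝ)

noncomputable def half : AddCircle (1 : ℝ) := ((1/2 : ℝ) : AddCircle (1 : ℝ))

noncomputable def alphaMap (x : T5) : T5 := ![x 0, -x 1, -x 2, half - x 3, -x 4]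
noncomputable def betaMap (x : T5) : T5 := ![-x 0, half - x 1, -x 2, x 3, -x 4]
noncomputable def gammaMap (x : T5) : T5 := ![-x 0, -x 1, half - x 2, -x 3, x 4]

noncomputable def gammaSetoid : Setoid T5 :=
  Relation.EqvGen.setoid (fun x y => y = alphaMap x ∨ y = betaMap x ∨ y = gammaMap x)

abbrev T5modGamma : Type := Quotient gammaSetoid

noncomputable def quotPi : T5 → T5modGamma := Quotient.mk gammaSetoid

theorem quotPi_continuous : Continuous quotPi := continuous_quotient_mk'

/-- The point `p + t·eᵢ` of `T⁵` (mod `ℤ⁵`). -/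
noncomputable def linePt (i : Fin 5) (p : T5) (t : ℝ) : T5 :=
  fun j => p j + ((if j = i then t else 0 : ℝ) : AddCircle (1 : ℝ))

/-- The base point `p₁ = (0, 1/4, 0, 0, 0)`. -/
noncomputable def p1 : T5 := ![0, ((1/4 : ℝ) : AddCircle (1 : ℝ)), 0, 0, 0]

/-! ### Auxiliary material -/

open unitInterval

noncomputable def q3 : T5 := ![0, 0, 0, ((1/4 : ℝ) : AddCircle (1 : ℝ)), 0]

lemma c_add (x y : ℝ) : ((x + y : ℝ) : AddCircle (1:ℝ)) = ((x:ℝ):AddCircle (1:ℝ)) + ((y:ℝ):AddCircle (1:ℝ)) := AddCircle.coe_add 1 x y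
lemma c_neg (x : ℝ) : ((-x : ℝ) : AddCircle (1:ℝ)) = -((x:ℝ):AddCircle (1:ℝ)) := AddCircle.coe_neg 1
lemma c_zero : ((0 : ℝ) : AddCircle (1:ℝ)) = 0 := rfl
lemma c_one : ((1 : ℝ) : AddCircle (1:ℝ)) = 0 := AddCircle.coe_period 1
lemma c_period (x : ℝ) : ((x + 1 : ℝ) : AddCircle (1:ℝ)) = ((x:ℝ):AddCircle (1:ℝ)) := by
  rw [c_add, c_one, add_zero]
lemma half4 : half = ((4⁻¹ : ℝ) : AddCircle (1:ℝ)) + ((4⁻¹ : ℝ) : AddCircle (1:ℝ)) := by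
  rw [half, ← c_add]; norm_num

set_option linter.unnecessarySeqFocus false in
lemma beta_line (i : Fin 5) (hi : i ≠ 3) (b : ℝ) :
    betaMap (linePt i p1 b) = linePt i p1 (-b) := by
  funext j
  fin_cases i <;> [skip; skip; skip; exact absurd rfl hi; skip] <;>
    fin_cases j <;> simp [betaMap, linePt, p1, c_neg, c_zero, half4] <;> abel

set_option linter.unnecessarySeqFocus false in
lemma alpha_line (b : ℝ) : alphaMap (linePt 3 q3 b) = linePt 3 q3 (-b) := by
  funext j
  fin_cases j <;> simp [alphaMap, linePt, q3, c_neg, c_zero, half4] <;> abel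

lemma line_shift (i : Fin 5) (p : T5) (t : ℝ) : linePt i p (-t) = linePt i p (1 - t) := by
  funext j
  by_cases h : j = i
  · simp only [linePt, if_pos h, show (1 - t : ℝ) = -t + 1 by ring, c_period]
  · simp only [linePt, if_neg h]

lemma quotPi_rel {x y : T5} (h : y = alphaMap x ∨ y = betaMap x ∨ y = gammaMap x) :
    quotPi y = quotPi x :=
  (Quotient.sound (Relation.EqvGen.rel x y h)).symm

lemma quotPi_alpha (x : T5) : quotPi (alphaMap x) = quotPi x :=
  quotPi_rel (Or.inl rfl)

lemma quotPi_beta (x : T5) : quotPi (betaMap x) = quotPi x :=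
  quotPi_rel (Or.inr (Or.inl rfl))

/-- the folding point for direction `i` -/
noncomputable def qpt (i : Fin 5) : T5 := if i = 3 then q3 else p1

lemma fold_key (i : Fin 5) (b : ℝ) :
    quotPi (linePt i (qpt i) (-b)) = quotPi (linePt i (qpt i) b) := by
  by_cases hi : i = 3
  · subst hi
    rw [qpt, if_pos rfl, ← alpha_line b, quotPi_alpha]
  · rw [qpt, if_neg hi, ← beta_line i hi b, quotPi_beta]

lemma homotopic_of_line {Y : Type} [TopologicalSpace Y] {a : Y}
    (Φ : ℝ × ℝ → Y) (hΦ : Continuous Φ)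
    (p q : ℝ → ℝ × ℝ) (hp : Continuous p) (hq : Continuous q)
    (h0 : p 0 = q 0) (h1 : p 1 = q 1)
    (f g : Path a a) (hf : ∀ t : I, f t = Φ (p t)) (hg : ∀ t : I, g t = Φ (q t)) :
    f.Homotopic g := by
  refine ⟨⟨⟨⟨fun z => Φ ((1 - z.1.1) • p z.2.1 + z.1.1 • q z.2.1), ?_⟩, ?_, ?_⟩, ?_⟩⟩
  · exact hΦ.comp <| ((continuous_const.sub (continuous_subtype_val.comp continuous_fst)).smul
      (hp.comp (continuous_subtype_val.comp continuous_snd))).add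
      ((continuous_subtype_val.comp continuous_fst).smul
      (hq.comp (continuous_subtype_val.comp continuous_snd)))
  · intro x; simp [hf x]
  · intro x; simp [hg x]
  · intro t x hx
    have key : ∀ u : ℝ × ℝ, (1 - t.1) • u + t.1 • u = u := by
      intro u; rw [← add_smul]; ring_nf; exact one_smul ℝ u
    rcases hx with hx | hx <;> subst hx
    · show Φ _ = f 0
      rw [hf 0, show ((0:I):ℝ) = 0 from rfl, h0, key]
    · show Φ _ = f 1
      rw [hf 1, show ((1:I):ℝ) = 1 from rfl, h1, key]

lemma homotopic_refl_of_symm {Y : Type} [TopologicalSpace Y] {a : Y}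
    (P : Path a a) (hsym : ∀ t : I, P (σ t) = P t) : P.Homotopic (Path.refl a) := by
  have mem : ∀ s t : I, (1 - s.1) * min t.1 (1 - t.1) ∈ I := by
    intro s t
    constructor
    · exact mul_nonneg (by linarith [s.2.2]) (le_min t.2.1 (by linarith [t.2.2]))
    · exact mul_le_one₀ (by linarith [s.2.1]) (le_min t.2.1 (by linarith [t.2.2]))
        (min_le_of_left_le t.2.2)
  refine ⟨⟨⟨⟨fun z => P ⟨(1 - z.1.1) * min z.2.1 (1 - z.2.1), mem z.1 z.2⟩, ?_⟩, ?_, ?_⟩, ?_⟩⟩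
  · apply P.continuous.comp
    apply Continuous.subtype_mk
    exact (continuous_const.sub (continuous_subtype_val.comp continuous_fst)).mul
      ((continuous_subtype_val.comp continuous_snd).min
        (continuous_const.sub (continuous_subtype_val.comp continuous_snd)))
  · intro x
    rcases le_total (x:ℝ) (1 - x) with h | h
    · exact congrArg P (Subtype.ext (by simp [min_eq_left h]))
    · calc P ⟨_, _⟩ = P (σ x) := congrArg P (Subtype.ext (by simp [min_eq_right h, coe_symm_eq]))
        _ = P x := hsym x
  · intro x
    have : P ⟨(1 - ((1:I):ℝ)) * min (x:ℝ) (1 - x), mem 1 x⟩ = P 0 :=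
      congrArg P (Subtype.ext (by norm_num))
    simpa [this] using P.source
  · intro t x hx
    rcases hx with hx | hx <;> subst hx
    · show P _ = P.toContinuousMap 0
      have : P ⟨(1 - t.1) * min ((0:I):ℝ) (1 - ((0:I):ℝ)), mem t 0⟩ = P 0 :=
        congrArg P (Subtype.ext (by norm_num))
      simpa using this
    · show P _ = P.toContinuousMap 1
      have h1 : P ⟨(1 - t.1) * min ((1:I):ℝ) (1 - ((1:I):ℝ)), mem t 1⟩ = P 0 :=
        congrArg P (Subtype.ext (by norm_num))
      have h2 : P.toContinuousMap 1 = a := P.target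
      rw [h2, h1, P.source]

noncomputable def sfun (t : ℝ) : ℝ := min (3*t) (min 1 (3 - 3*t))
noncomputable def bfun (t : ℝ) : ℝ := max 0 (min 1 (3*t - 1))

lemma sfun_cont : Continuous sfun := (continuous_const.mul continuous_id).min
  (continuous_const.min (continuous_const.sub (continuous_const.mul continuous_id)))
lemma bfun_cont : Continuous bfun := continuous_const.max
  (continuous_const.min ((continuous_const.mul continuous_id).sub continuous_const))

lemma sfun_symm (t : ℝ) : sfun (1 - t) = sfun t := by
  unfold sfun
  rw [show 3 - 3*(1-t) = 3*t by ring, show (3:ℝ)*(1-t) = 3 - 3*t by ring,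
    min_left_comm, min_left_comm (3*t), min_comm (3 - 3*t)]

/-- `β(p₁ + t·e₁) = p₁ + (1-t)·e₁ (mod ℤ⁵)`, and consequently the image under the
quotient map `π : T⁵ → T⁵/Γ` of each standard generating loop
`ρᵢ(t) = p₀ + t·eᵢ` of `π₁(T⁵, p₀)` is null-homotopic in `T⁵/Γ`. -/
theorem stmt9 :
    (∀ t : ℝ, betaMap (linePt 0 p1 t) = linePt 0 p1 (1 - t)) ∧
    (∀ (i : Fin 5) (p₀ : T5) (ρ : Path p₀ p₀),
      (∀ t : unitInterval, ρ t = linePt i p₀ (t : ℝ)) →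
      (ρ.map quotPi_continuous).Homotopic (Path.refl (quotPi p₀))) := by
  constructor
  · intro t
    rw [← line_shift, beta_line 0 (by decide) t]
  · intro i p₀ ρ hρ
    set q : T5 := qpt i with hq
    set r : Fin 5 → ℝ := fun j => (q j - p₀ j).out with hr
    have hc1 : ∀ j, p₀ j + ((r j : ℝ) : AddCircle (1:ℝ)) = q j := by
      intro j
      show p₀ j + ((q j - p₀ j).out : AddCircle (1:ℝ)) = q j
      rw [QuotientAddGroup.out_eq' (q j - p₀ j)]
      abel
    set Φ : ℝ × ℝ → T5modGamma := fun z =>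
      quotPi (fun j => p₀ j + ((z.1 * r j : ℝ) : AddCircle (1:ℝ))
        + ((if j = i then z.2 else 0 : ℝ) : AddCircle (1:ℝ))) with hΦ
    have hΦc : Continuous Φ := by
      apply quotPi_continuous.comp
      apply continuous_pi
      intro j
      apply Continuous.add
      · exact continuous_const.add
          (continuous_quotient_mk'.comp (continuous_fst.mul continuous_const))
      · by_cases h : j = i
        · simp only [h, if_pos rfl]
          exact continuous_quotient_mk'.comp continuous_snd
        · simp only [if_neg h]
          exact continuous_const
    have Φ0 : ∀ t : ℝ, Φ (0, t) = quotPi (linePt i p₀ t) := by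
      intro t
      apply congrArg quotPi
      funext j
      show p₀ j + _ + _ = _
      rw [zero_mul, c_zero, add_zero]
      rfl
    have Φ1 : ∀ b : ℝ, Φ (1, b) = quotPi (linePt i q b) := by
      intro b
      apply congrArg quotPi
      funext j
      show p₀ j + _ + _ = _
      rw [one_mul, hc1 j]
      rfl
    have Φper : ∀ s b : ℝ, Φ (s, b + 1) = Φ (s, b) := by
      intro s b
      apply congrArg quotPi
      funext j
      by_cases h : j = i
      · show p₀ j + _ + ((if j = i then b + 1 else 0 : ℝ) : AddCircle (1:ℝ)) = _
        rw [if_pos h, c_period]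
        simp [h]
      · simp [h]
    have Φfold : ∀ b : ℝ, Φ (1, 1 - b) = Φ (1, b) := by
      intro b
      rw [show (1 - b : ℝ) = -b + 1 by ring, Φper, Φ1, Φ1, fold_key]
    -- the reparametrized loop P
    have Pmemo : Φ (sfun 0, bfun 0) = quotPi p₀ := by
      have h0 : sfun 0 = 0 := by unfold sfun; norm_num
      have h0' : bfun 0 = 0 := by unfold bfun; norm_num
      rw [h0, h0', Φ0]
      apply congrArg quotPi
      funext j
      simp [linePt]
    have Pmemo1 : Φ (sfun 1, bfun 1) = quotPi p₀ := by
      have h0 : sfun 1 = 0 := by unfold sfun; norm_num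
      have h0' : bfun 1 = 1 := by unfold bfun; norm_num
      rw [h0, h0', show (1:ℝ) = 0 + 1 by ring, Φper, Φ0]
      apply congrArg quotPi
      funext j
      simp [linePt]
    set P : Path (quotPi p₀) (quotPi p₀) :=
      { toFun := fun t => Φ (sfun t, bfun t)
        continuous_toFun := hΦc.comp
          ((sfun_cont.comp continuous_subtype_val).prodMk
            (bfun_cont.comp continuous_subtype_val))
        source' := Pmemo
        target' := Pmemo1 } with hP
    have hsymP : ∀ t : ℝ, Φ (sfun (1 - t), bfun (1 - t)) = Φ (sfun t, bfun t) := by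
      intro t
      rw [sfun_symm]
      rcases le_or_gt t (1/3) with h1 | h1
      · have hb : bfun t = 0 := by
          unfold bfun
          rw [max_eq_left (min_le_of_right_le (by linarith))]
        have hb' : bfun (1 - t) = 1 := by
          unfold bfun
          rw [min_eq_left (by linarith), max_eq_right (by norm_num)]
        rw [hb, hb', show (1:ℝ) = 0 + 1 by ring, Φper]
      rcases le_or_gt t (2/3) with h2 | h2
      · have hs : sfun t = 1 := by
          have a1 : (1:ℝ) ≤ 3*t := by linarith
          have a2 : (1:ℝ) ≤ 3 - 3*t := by linarith
          unfold sfun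
          rw [min_eq_left a2, min_eq_right a1]
        have hb : bfun t = 3*t - 1 := by
          unfold bfun
          rw [min_eq_right (by linarith), max_eq_right (by linarith)]
        have hb' : bfun (1 - t) = 1 - (3*t - 1) := by
          unfold bfun
          rw [show 3*(1-t) - 1 = 2 - 3*t by ring, min_eq_right (by linarith),
            max_eq_right (by linarith), ]
          ring
        rw [hs, hb, hb', Φfold]
      · have hb : bfun t = 1 := by
          unfold bfun
          rw [min_eq_left (by linarith), max_eq_right (by norm_num)]
        have hb' : bfun (1 - t) = 0 := by
          unfold bfun
          rw [show 3*(1-t) - 1 = 2 - 3*t by ring,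
            max_eq_left (min_le_of_right_le (by linarith))]
        rw [hb, hb', show (1:ℝ) = 0 + 1 by ring, Φper]
    have step1 : (ρ.map quotPi_continuous).Homotopic P := by
      apply homotopic_of_line Φ hΦc (fun t => (0, t)) (fun t => (sfun t, bfun t))
        (continuous_const.prodMk continuous_id) (sfun_cont.prodMk bfun_cont)
      · show ((0:ℝ), (0:ℝ)) = (sfun 0, bfun 0)
        unfold sfun bfun; norm_num
      · show ((0:ℝ), (1:ℝ)) = (sfun 1, bfun 1)
        unfold sfun bfun; norm_num
      · intro t
        show quotPi (ρ t) = _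
        rw [hρ t, ← Φ0]
      · intro t
        rfl
    have step2 : P.Homotopic (Path.refl (quotPi p₀)) := by
      apply homotopic_refl_of_symm
      intro t
      show Φ (sfun (σ t : ℝ), bfun (σ t : ℝ)) = Φ (sfun t, bfun t)
      rw [coe_symm_eq, hsymP]
    exact step1.trans step2
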